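/- Non-abelian averaged one-point-to-two-point inequality: let ρ be a density matrix on a finite-dimensional complex space, Ω a nonempty finite index set, n ≥ 1, and for each x ∈ Ω let (O_x^{(α)})_{α ∈ Fin n} be matrices of the same size as ρ. Define O_{xy} := (1/n) Σ_α O_x^{(α)} (O_y^{(α)})†. Then for every vector v ∈ ℂⁿ with Σ_α |v_α|² = 1, Σ_{x,y ∈ Ω} F(ρ, O_{xy} ρ O_{xy}†) ≥ (1/n) · ( Σ_{x ∈ Ω} F(ρ, (Σ_α v_α O_x^{(α)}) ρ (Σ_α v_α O_x^{(α)})†) )². -/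

import Mathlib

noncomputable section

open scoped Matrix Kronecker ComplexOrder

/-- The positive semidefinite square root of a matrix (defaults to `0` if not PSD). -/
noncomputable def matSqrt {n : Type*} [Fintype n] [DecidableEq n] (M : Matrix n n ℂ) :
    Matrix n n ℂ :=
  open scoped Classical in
  if h : M.PosSemidef then
    (h.1.eigenvectorUnitary : Matrix n n ℂ) *
      Matrix.diagonal (fun i => ((Real.sqrt (h.1.eigenvalues i) : ℝ) : ℂ)) *
      (star h.1.eigenvectorUnitary : Matrix n n ℂ)
  else 0

/-- The fidelity `F(ρ, σ) = tr √(√ρ σ √ρ)` of two PSD matrices. -/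
noncomputable def fidelity {n : Type*} [Fintype n] [DecidableEq n] (ρ σ : Matrix n n ℂ) : ℝ :=
  (matSqrt (matSqrt ρ * σ * matSqrt ρ)).trace.re

/-- The ℓ²→ℓ² operator norm of a complex matrix. -/
noncomputable def opNorm {m n : Type*} [Fintype m] [Fintype n] [DecidableEq n]
    (M : Matrix m n ℂ) : ℝ :=
  ‖(Matrix.toEuclideanLin.trans LinearMap.toContinuousLinearMap) M‖

/-- Partial trace over the second tensor factor. -/
noncomputable def ptraceB {A B : Type*} [Fintype B]
    (ρ : Matrix (A × B) (A × B) ℂ) : Matrix A A ℂ :=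
  Matrix.of fun a a' => ∑ b : B, ρ (a, b) (a', b)

/-!
Write `r = √ρ`. Since `√ρ (AρA†) √ρ = (rAr)(rAr)†`, each fidelity `F(ρ, AρA†)` is the trace norm
`‖rAr‖₁`, and the trace norm is dual to the operator norm: `‖M‖₁ = max_{‖C‖ ≤ 1} Re tr(CM)`.
Choosing optimal contractions `C_x` for the one-point terms, `Σ_x F(ρ, A_xρA_x†)` becomes
`Re Σ_α v_α tr(T_α r)` with `T_α = Σ_x C_x r O_x^{(α)}`. Two Cauchy–Schwarz inequalities (in `ℂⁿ`
and for the Hilbert–Schmidt inner product, where `tr(r†r) = tr ρ = 1`) bound its square by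
`Σ_α tr(T_α T_α†) = Σ_{x,y} Re tr(C_y† C_x · r(n O_{xy})r)`, and duality again bounds each term by
`n ‖r O_{xy} r‖₁ = n F(ρ, O_{xy} ρ O_{xy}†)`.
-/

namespace Matrix

open scoped MatrixOrder Matrix.Norms.L2Operator ComplexStarModule

variable {d : Type*} [Fintype d]

theorem re_trace_le_re_trace {X Y : Matrix d d ℂ} (h : X ≤ Y) : X.trace.re ≤ Y.trace.re := by
  have h' := (le_iff.mp h).trace_nonneg
  rw [trace_sub, sub_nonneg] at h'
  exact (Complex.le_def.mp h').1

variable [DecidableEq d]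

theorem sq_norm_trace_conjTranspose_mul_le (A B : Matrix d d ℂ) :
    ‖(Aᴴ * B).trace‖ ^ 2 ≤ (Aᴴ * A).trace.re * (Bᴴ * B).trace.re := by
  let f := tracePositiveLinearMap d ℂ ℂ
  have hnorm (X : Matrix d d ℂ) : ‖f.toPreGNS X‖ ^ 2 = (Xᴴ * X).trace.re := by
    have h := congrArg Complex.re (f.preGNS_norm_sq (f.toPreGNS X))
    rwa [← Complex.ofReal_pow, Complex.ofReal_re] at h
  rw [← hnorm, ← hnorm, ← mul_pow]
  gcongr
  exact norm_inner_le_norm (𝕜 := ℂ) (f.toPreGNS A) (f.toPreGNS B)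

/-- Conjugating `ℜ Y ≤ ‖Y‖` by `√S` gives the bound. -/
theorem re_trace_mul_le {S : Matrix d d ℂ} (hS : 0 ≤ S) (Y : Matrix d d ℂ) :
    (Y * S).trace.re ≤ ‖Y‖ * S.trace.re := by
  set D := CFC.sqrt S
  have hD : star D = D := (CFC.sqrt_nonneg S).isSelfAdjoint.star_eq
  have hre : (Y * S).trace.re = (star D * (ℜ Y : Matrix d d ℂ) * D).trace.re := by
    have hcyc : (Y * S).trace = (D * Y * D).trace := by
      rw [← CFC.sqrt_mul_sqrt_self S hS, ← Matrix.mul_assoc, trace_mul_comm, ← Matrix.mul_assoc]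
    have hstar : (D * star Y * D).trace = star (D * Y * D).trace := by
      rw [← trace_conjTranspose, ← star_eq_conjTranspose]
      simp only [star_mul, hD, Matrix.mul_assoc]
    rw [realPart_apply_coe, hD, Matrix.mul_smul, Matrix.smul_mul, trace_smul, Matrix.mul_add,
      Matrix.add_mul, trace_add, hstar, hcyc]
    simp only [Complex.real_smul, Complex.re_ofReal_mul, Complex.add_re, Complex.star_def,
      Complex.conj_re]
    ring
  have hle := CStarAlgebra.star_left_conjugate_le_norm_smul (a := D)
    (b := (ℜ Y : Matrix d d ℂ)) (ℜ Y).2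
  rw [hD, CFC.sqrt_mul_sqrt_self S hS] at hle
  have htr : 0 ≤ S.trace.re := (Complex.le_def.mp (nonneg_iff_posSemidef.mp hS).trace_nonneg).1
  rw [hre, hD]
  refine (re_trace_le_re_trace hle).trans ?_
  rw [trace_smul, Complex.real_smul, Complex.re_ofReal_mul]
  exact mul_le_mul_of_nonneg_right (realPart.norm_le Y) htr

theorem cfc_mul_cfc (A : Matrix d d ℂ) (f g : ℝ → ℝ) :
    cfc f A * cfc g A = cfc (fun t => f t * g t) A :=
  (cfc_mul f g A (A.finite_real_spectrum.continuousOn f)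
    (A.finite_real_spectrum.continuousOn g)).symm

/-- Polar decomposition with `R = (MM†)^{-1/2} M`, where `t ↦ (√t)⁻¹` vanishes at `0`, so the
inverse square root lives on the support of `MM†`. -/
theorem exists_norm_le_one_sqrt_mul_eq (M : Matrix d d ℂ) :
    ∃ R : Matrix d d ℂ, ‖R‖ ≤ 1 ∧ CFC.sqrt (M * Mᴴ) * R = M ∧ M * Rᴴ = CFC.sqrt (M * Mᴴ) := by
  set P := M * Mᴴ
  have hP : 0 ≤ P := (posSemidef_self_mul_conjTranspose M).nonneg
  have hspec {t : ℝ} (ht : t ∈ spectrum ℝ P) : 0 ≤ t := spectrum_nonneg_of_nonneg hP ht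
  have hmul := cfc_mul_cfc P
  have hid : cfc id P = P := cfc_id ℝ P
  have hmul_self (f : ℝ → ℝ) : cfc f P * P = cfc (fun t => f t * t) P := by
    have h := hmul f id; rwa [hid] at h
  have hself_mul (f : ℝ → ℝ) : P * cfc f P = cfc (fun t => t * f t) P := by
    have h := hmul id f; rwa [hid] at h
  have hsqrt : CFC.sqrt P = cfc Real.sqrt P := by rw [CFC.sqrt_eq_real_sqrt P, cfcₙ_eq_cfc]
  set φ := cfc (fun t => (√t)⁻¹) P
  have hφ : φᴴ = φ := (cfc_predicate (fun t : ℝ => (√t)⁻¹) P : IsSelfAdjoint φ).star_eq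
  refine ⟨φ * M, ?_, ?_, ?_⟩
  · have hnorm : ‖φ * P * φ‖ ≤ 1 := by
      rw [hmul_self, hmul]
      refine norm_cfc_le zero_le_one fun t ht => ?_
      rw [mul_comm, ← mul_assoc, ← mul_inv, Real.mul_self_sqrt (hspec ht)]
      rcases eq_or_ne t 0 with h | h <;> simp [h]
    have h : ‖φ * M‖ * ‖φ * M‖ ≤ 1 := by
      rw [← CStarRing.norm_self_mul_star, star_eq_conjTranspose, conjTranspose_mul, hφ]
      simpa only [P, Matrix.mul_assoc] using hnorm
    nlinarith [norm_nonneg (φ * M)]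
  · have hsupport : CFC.sqrt P * φ * P = P := by
      rw [hsqrt, hmul, hmul_self]
      nth_rw 2 [← hid]
      refine cfc_congr fun t ht => ?_
      rcases (hspec ht).eq_or_lt with h | h
      · simp [← h]
      · simp [(Real.sqrt_pos.mpr h).ne']
    have h0 : (CFC.sqrt P * φ - 1) * (M * Mᴴ) = 0 := by
      rw [Matrix.sub_mul, hsupport, Matrix.one_mul, sub_self]
    rw [mul_self_mul_conjTranspose_eq_zero, Matrix.sub_mul, Matrix.one_mul, sub_eq_zero] at h0
    rwa [← Matrix.mul_assoc]
  · rw [conjTranspose_mul, hφ, ← Matrix.mul_assoc]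
    change P * φ = CFC.sqrt P
    rw [hsqrt, hself_mul]
    refine cfc_congr fun t _ => ?_
    simp only [← div_eq_mul_inv, Real.div_sqrt]

noncomputable def traceNorm (M : Matrix d d ℂ) : ℝ := (CFC.sqrt (M * Mᴴ)).trace.re

theorem traceNorm_nonneg (M : Matrix d d ℂ) : 0 ≤ traceNorm M :=
  (Complex.le_def.mp (nonneg_iff_posSemidef.mp (CFC.sqrt_nonneg (M * Mᴴ))).trace_nonneg).1

theorem re_trace_mul_le_norm_mul_traceNorm (B M : Matrix d d ℂ) :
    (B * M).trace.re ≤ ‖B‖ * traceNorm M := by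
  obtain ⟨R, hR, hSR, -⟩ := exists_norm_le_one_sqrt_mul_eq M
  calc (B * M).trace.re = (B * (CFC.sqrt (M * Mᴴ) * R)).trace.re := by rw [hSR]
    _ = (R * B * CFC.sqrt (M * Mᴴ)).trace.re := by
        rw [← Matrix.mul_assoc, trace_mul_comm, Matrix.mul_assoc]
    _ ≤ ‖R * B‖ * traceNorm M := re_trace_mul_le (CFC.sqrt_nonneg (M * Mᴴ)) (R * B)
    _ ≤ ‖B‖ * traceNorm M := by
        gcongr
        · exact traceNorm_nonneg M
        · exact (l2_opNorm_mul R B).trans (mul_le_of_le_one_left (norm_nonneg B) hR)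

theorem exists_norm_le_one_re_trace_mul_eq_traceNorm (M : Matrix d d ℂ) :
    ∃ C : Matrix d d ℂ, ‖C‖ ≤ 1 ∧ (C * M).trace.re = traceNorm M := by
  obtain ⟨R, hR, -, hMR⟩ := exists_norm_le_one_sqrt_mul_eq M
  exact ⟨Rᴴ, by rwa [l2_opNorm_conjTranspose], by rw [trace_mul_comm, hMR, traceNorm]⟩

theorem traceNorm_real_smul {c : ℝ} (hc : 0 ≤ c) (M : Matrix d d ℂ) :
    traceNorm ((c : ℂ) • M) = c * traceNorm M := by
  have hre (C : Matrix d d ℂ) : (C * ((c : ℂ) • M)).trace.re = c * (C * M).trace.re := by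
    rw [Matrix.mul_smul, trace_smul, smul_eq_mul, Complex.re_ofReal_mul]
  obtain ⟨C, hC, hCM⟩ := exists_norm_le_one_re_trace_mul_eq_traceNorm M
  obtain ⟨C', hC', hC'M⟩ := exists_norm_le_one_re_trace_mul_eq_traceNorm ((c : ℂ) • M)
  refine le_antisymm ?_ ?_
  · rw [← hC'M, hre]
    exact mul_le_mul_of_nonneg_left ((re_trace_mul_le_norm_mul_traceNorm C' M).trans
      (mul_le_of_le_one_left (traceNorm_nonneg M) hC')) hc
  · rw [← hCM, ← hre]
    exact (re_trace_mul_le_norm_mul_traceNorm C _).trans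
      (mul_le_of_le_one_left (traceNorm_nonneg _) hC)

variable {Ω ι : Type*} [Fintype Ω] [Fintype ι]

theorem sum_re_trace_mul_conjTranspose_le_sum_traceNorm (K : Ω → ι → Matrix d d ℂ)
    (C : Ω → Matrix d d ℂ) (hC : ∀ x, ‖C x‖ ≤ 1) :
    ∑ α, ((∑ x, C x * K x α) * (∑ x, C x * K x α)ᴴ).trace.re ≤
      ∑ x, ∑ y, traceNorm (∑ α, K x α * (K y α)ᴴ) := by
  have hterm (x y : Ω) (α : ι) : ((C x * K x α) * (C y * K y α)ᴴ).trace =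
      ((C y)ᴴ * C x * (K x α * (K y α)ᴴ)).trace := by
    rw [conjTranspose_mul, ← Matrix.mul_assoc, trace_mul_comm]
    simp only [Matrix.mul_assoc]
  have hexpand : ∑ α, ((∑ x, C x * K x α) * (∑ x, C x * K x α)ᴴ).trace.re =
      ∑ x, ∑ y, ((C y)ᴴ * C x * ∑ α, K x α * (K y α)ᴴ).trace.re := by
    simp only [conjTranspose_sum, Matrix.sum_mul, Matrix.mul_sum, trace_sum, hterm, Complex.re_sum]
    rw [Finset.sum_comm]
    conv_rhs => rw [Finset.sum_comm]
    exact Finset.sum_congr rfl fun y _ => Finset.sum_comm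
  rw [hexpand]
  refine Finset.sum_le_sum fun x _ => Finset.sum_le_sum fun y _ => ?_
  refine (re_trace_mul_le_norm_mul_traceNorm _ _).trans (mul_le_of_le_one_left
    (traceNorm_nonneg _) ?_)
  calc ‖(C y)ᴴ * C x‖ ≤ ‖(C y)ᴴ‖ * ‖C x‖ := l2_opNorm_mul _ _
    _ ≤ 1 := by rw [l2_opNorm_conjTranspose]; exact mul_le_one₀ (hC y) (norm_nonneg _) (hC x)

theorem sq_sum_traceNorm_le (K : Ω → ι → Matrix d d ℂ) (v : ι → ℂ) (s : Matrix d d ℂ) :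
    (∑ x, traceNorm ((∑ α, v α • K x α) * s)) ^ 2 ≤
      (∑ α, ‖v α‖ ^ 2) * (sᴴ * s).trace.re * ∑ x, ∑ y, traceNorm (∑ α, K x α * (K y α)ᴴ) := by
  choose C hC hCeq using fun x => exists_norm_le_one_re_trace_mul_eq_traceNorm
    ((∑ α, v α • K x α) * s)
  set T : ι → Matrix d d ℂ := fun α => ∑ x, C x * K x α
  have hsum : ∑ x, traceNorm ((∑ α, v α • K x α) * s) = (∑ α, v α * (T α * s).trace).re := by
    rw [← Finset.sum_congr rfl fun x _ => hCeq x, ← Complex.re_sum]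
    congr 1
    simp only [T, Matrix.sum_mul, trace_sum, Matrix.smul_mul, Matrix.mul_smul, trace_smul,
      smul_eq_mul, Finset.mul_sum, Matrix.mul_assoc]
    exact Finset.sum_comm
  have hcs (α : ι) : ‖(T α * s).trace‖ ^ 2 ≤ (T α * (T α)ᴴ).trace.re * (sᴴ * s).trace.re := by
    simpa only [conjTranspose_conjTranspose] using sq_norm_trace_conjTranspose_mul_le (T α)ᴴ s
  calc (∑ x, traceNorm ((∑ α, v α • K x α) * s)) ^ 2
      ≤ (∑ α, ‖v α‖ * ‖(T α * s).trace‖) ^ 2 := by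
        rw [hsum, ← sq_abs]
        gcongr
        refine (Complex.abs_re_le_norm _).trans ((norm_sum_le _ _).trans_eq ?_)
        simp only [norm_mul]
    _ ≤ (∑ α, ‖v α‖ ^ 2) * ∑ α, ‖(T α * s).trace‖ ^ 2 := Finset.sum_mul_sq_le_sq_mul_sq _ _ _
    _ ≤ (∑ α, ‖v α‖ ^ 2) * ∑ α, (T α * (T α)ᴴ).trace.re * (sᴴ * s).trace.re := by
        gcongr with α
        exact hcs α
    _ ≤ (∑ α, ‖v α‖ ^ 2) * (sᴴ * s).trace.re * ∑ x, ∑ y, traceNorm (∑ α, K x α * (K y α)ᴴ) := by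
        rw [← Finset.sum_mul, mul_comm _ (sᴴ * s).trace.re, ← mul_assoc]
        have hs : 0 ≤ (sᴴ * s).trace.re :=
          (Complex.le_def.mp (posSemidef_conjTranspose_mul_self s).trace_nonneg).1
        gcongr
        exact sum_re_trace_mul_conjTranspose_le_sum_traceNorm K C hC

end Matrix

section Fidelity

open scoped MatrixOrder

open Matrix

variable {d : Type*} [Fintype d] [DecidableEq d]

theorem matSqrt_eq_sqrt {M : Matrix d d ℂ} (h : M.PosSemidef) : matSqrt M = CFC.sqrt M := by
  rw [CFC.sqrt_eq_real_sqrt M h.nonneg, cfcₙ_eq_cfc, h.1.cfc_eq, Matrix.IsHermitian.cfc,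
    Unitary.conjStarAlgAut_apply, matSqrt, dif_pos h]
  rfl

theorem conjTranspose_matSqrt {ρ : Matrix d d ℂ} (hρ : ρ.PosSemidef) :
    (matSqrt ρ)ᴴ = matSqrt ρ := by
  rw [matSqrt_eq_sqrt hρ]
  exact (CFC.sqrt_nonneg ρ).isSelfAdjoint.star_eq

theorem matSqrt_mul_self {ρ : Matrix d d ℂ} (hρ : ρ.PosSemidef) :
    matSqrt ρ * matSqrt ρ = ρ := by
  rw [matSqrt_eq_sqrt hρ]
  exact CFC.sqrt_mul_sqrt_self ρ hρ.nonneg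

theorem fidelity_conj_eq_traceNorm {ρ : Matrix d d ℂ} (hρ : ρ.PosSemidef) (A : Matrix d d ℂ) :
    fidelity ρ (A * ρ * Aᴴ) = (matSqrt ρ * A * matSqrt ρ).traceNorm := by
  set r := matSqrt ρ
  have hconj : r * (A * ρ * Aᴴ) * r = (r * A * r) * (r * A * r)ᴴ := by
    rw [← matSqrt_mul_self hρ]
    simp only [conjTranspose_mul, conjTranspose_matSqrt hρ, r, Matrix.mul_assoc]
  rw [fidelity, hconj, matSqrt_eq_sqrt (posSemidef_self_mul_conjTranspose _), traceNorm]

end Fidelity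

theorem nonabelian_avg_one_point_two_point_general
    {m : Type*} [Fintype m] [DecidableEq m]
    (ρ : Matrix m m ℂ) (hρ : ρ.PosSemidef) (hρtr : ρ.trace = 1)
    {Ω : Type*} [Fintype Ω]
    (n : ℕ) (O : Ω → Fin n → Matrix m m ℂ)
    (Opair : Ω → Ω → Matrix m m ℂ)
    (hOpair : ∀ x y, Opair x y = ((n : ℂ))⁻¹ • ∑ α : Fin n, O x α * (O y α)ᴴ)
    (v : Fin n → ℂ) (hv : ∑ α, ‖v α‖ ^ 2 = 1) :
    ((1 : ℝ) / n) *
        (∑ x : Ω, fidelity ρ ((∑ α, v α • O x α) * ρ * (∑ α, v α • O x α)ᴴ)) ^ 2 ≤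
      ∑ x : Ω, ∑ y : Ω, fidelity ρ (Opair x y * ρ * (Opair x y)ᴴ) := by
  set r := matSqrt ρ
  have hr : rᴴ = r := conjTranspose_matSqrt hρ
  set K : Ω → Fin n → Matrix m m ℂ := fun x α => r * O x α
  have hone (x : Ω) : fidelity ρ ((∑ α, v α • O x α) * ρ * (∑ α, v α • O x α)ᴴ) =
      ((∑ α, v α • K x α) * r).traceNorm := by
    rw [fidelity_conj_eq_traceNorm hρ, Matrix.mul_sum]
    simp only [K, r, Matrix.mul_smul]
  have htwo (x y : Ω) : fidelity ρ (Opair x y * ρ * (Opair x y)ᴴ) =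
      (n : ℝ)⁻¹ * (∑ α, K x α * (K y α)ᴴ).traceNorm := by
    rw [fidelity_conj_eq_traceNorm hρ, hOpair,
      ← Matrix.traceNorm_real_smul (inv_nonneg.mpr n.cast_nonneg)]
    simp only [K, r, Matrix.mul_smul, Matrix.smul_mul, Matrix.mul_sum, Matrix.sum_mul,
      Matrix.conjTranspose_mul, hr, Matrix.mul_assoc, Complex.ofReal_inv, Complex.ofReal_natCast]
  have htr : (rᴴ * r).trace.re = 1 := by
    rw [hr, matSqrt_mul_self hρ, hρtr, Complex.one_re]
  calc ((1 : ℝ) / n) *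
        (∑ x : Ω, fidelity ρ ((∑ α, v α • O x α) * ρ * (∑ α, v α • O x α)ᴴ)) ^ 2
      = (n : ℝ)⁻¹ * (∑ x, ((∑ α, v α • K x α) * r).traceNorm) ^ 2 := by
        simp only [hone, one_div]
    _ ≤ (n : ℝ)⁻¹ * ((∑ α, ‖v α‖ ^ 2) * (rᴴ * r).trace.re *
          ∑ x, ∑ y, (∑ α, K x α * (K y α)ᴴ).traceNorm) := by
        gcongr
        exact Matrix.sq_sum_traceNorm_le K v r
    _ = ∑ x : Ω, ∑ y : Ω, fidelity ρ (Opair x y * ρ * (Opair x y)ᴴ) := by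
        simp only [hv, htr, one_mul, Finset.mul_sum, htwo]

/-- **Non-abelian averaged one-point-to-two-point inequality** (Theorem 13):
`Σ_{x,y} F(ρ, O_{xy} ρ O_{xy}†) ≥ (1/n) (Σ_x F(ρ, (v·O_x) ρ (v·O_x)†))²` for every unit
vector `v ∈ ℂⁿ`, where `O_{xy} = (1/n) Σ_α O_x^{(α)} (O_y^{(α)})†`. -/
theorem nonabelian_avg_one_point_two_point
    {m : Type*} [Fintype m] [DecidableEq m]
    (ρ : Matrix m m ℂ) (hρ : ρ.PosSemidef) (hρtr : ρ.trace = 1)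
    {Ω : Type*} [Fintype Ω] [Nonempty Ω]
    (n : ℕ) (hn : 1 ≤ n) (O : Ω → Fin n → Matrix m m ℂ)
    (Opair : Ω → Ω → Matrix m m ℂ)
    (hOpair : ∀ x y, Opair x y = ((n : ℂ))⁻¹ • ∑ α : Fin n, O x α * (O y α)ᴴ)
    (v : Fin n → ℂ) (hv : ∑ α, ‖v α‖ ^ 2 = 1) :
    ((1 : ℝ) / n) *
        (∑ x : Ω, fidelity ρ ((∑ α, v α • O x α) * ρ * (∑ α, v α • O x α)ᴴ)) ^ 2 ≤
      ∑ x : Ω, ∑ y : Ω, fidelity ρ (Opair x y * ρ * (Opair x y)ᴴ) :=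
  nonabelian_avg_one_point_two_point_general ρ hρ hρtr n O Opair hOpair v hv
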